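/- If sup over x,y in a set M of |φ(x)ᵀφ(y) − k_{γ/2}(x,y)| < ε and |φ(x)ᵀφ(y) + k_{γ/2}(x,y)| ≤ 3 for all x,y ∈ M, then for ρ = (1/N)Σᵢ φ(xᵢ)φ(xᵢ)ᵀ with x₁,…,x_N ∈ M, the estimator f̂_ρ(x) = (1/M_γ) φ(x)ᵀ ρ φ(x) satisfies sup_{x∈M} |f̂_ρ(x) − f̂_γ(x)| < 3Nε/M_γ · (1/N) = 3ε/M_γ, where f̂_γ(x) = (1/(N M_γ)) Σᵢ k_γ(x,xᵢ) and k_γ(x,y) = k_{γ/2}(x,y)². -/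

import Mathlib

/-! Since `ρ` is the average of the rank-one matrices `φ(xᵢ)φ(xᵢ)ᵀ`, the quadratic form
`φ(x)ᵀ ρ φ(x)` is the average of `(φ(x)ᵀφ(xᵢ))²`, while `f̂_γ` averages `k_{γ/2}(x, xᵢ)²`.
Each difference of squares factors as `(a - b)(a + b)` with `|a - b| < ε` and `|a + b| ≤ 3`,
so the averages differ by less than `3ε`. -/

open Finset Matrix

theorem Matrix.dotProduct_sum_vecMulVec_self_mulVec {R ι n : Type*} [CommRing R] [Fintype n]
    (s : Finset ι) (v : ι → n → R) (u : n → R) :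
    u ⬝ᵥ ((∑ i ∈ s, vecMulVec (v i) (v i)) *ᵥ u) = ∑ i ∈ s, (u ⬝ᵥ v i) ^ 2 := by
  rw [sum_mulVec, dotProduct_sum]
  refine sum_congr rfl fun i _ => ?_
  rw [vecMulVec_mulVec, op_smul_eq_smul, dotProduct_smul, smul_eq_mul, dotProduct_comm, sq]

theorem abs_sq_sub_sq_lt {α : Type*} [CommRing α] [LinearOrder α] [IsStrictOrderedRing α]
    {a b ε C : α} (hsub : |a - b| < ε) (hadd : |a + b| ≤ C) (hC : 0 < C) :
    |a ^ 2 - b ^ 2| < C * ε := by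
  rw [sq_sub_sq, abs_mul]
  exact mul_lt_mul' hadd hsub (abs_nonneg _) hC

theorem abs_sum_div_card_lt {ι : Type*} [Fintype ι] [Nonempty ι] {f : ι → ℝ} {c : ℝ}
    (h : ∀ i, |f i| < c) : |(∑ i, f i) / Fintype.card ι| < c := by
  have hcard : (0 : ℝ) < Fintype.card ι := by exact_mod_cast Fintype.card_pos
  rw [abs_div, Nat.abs_cast, div_lt_iff₀ hcard]
  calc |∑ i, f i| ≤ ∑ i, |f i| := abs_sum_le_sum_abs _ _
    _ < ∑ _i : ι, c := sum_lt_sum_of_nonempty univ_nonempty fun i _ => h i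
    _ = c * Fintype.card ι := by rw [sum_const, card_univ, nsmul_eq_mul, mul_comm]

open Finset in
theorem dmkde_deterministic_approx_general (d D N : ℕ) (hN : 0 < N)
    (γ ε : ℝ) (hγ : 0 < γ)
    (M : Set (EuclideanSpace ℝ (Fin d)))
    (φ : EuclideanSpace ℝ (Fin d) → (Fin D → ℝ))
    (xs : Fin N → EuclideanSpace ℝ (Fin d)) (hxs : ∀ i, xs i ∈ M)
    (k : EuclideanSpace ℝ (Fin d) → EuclideanSpace ℝ (Fin d) → ℝ)
    (Mγ : ℝ) (hMγ : Mγ = (Real.pi / γ) ^ ((d : ℝ) / 2))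
    (happrox : ∀ x ∈ M, ∀ y ∈ M, |dotProduct (φ x) (φ y) - k x y| < ε)
    (hbound : ∀ x ∈ M, ∀ y ∈ M, |dotProduct (φ x) (φ y) + k x y| ≤ 3)
    (ρ : Matrix (Fin D) (Fin D) ℝ)
    (hρ : ρ = (1 / (N : ℝ)) • ∑ i, Matrix.vecMulVec (φ (xs i)) (φ (xs i)))
    (fρ fγ : EuclideanSpace ℝ (Fin d) → ℝ)
    (hfρ : ∀ x, fρ x = (1 / Mγ) * dotProduct (φ x) (ρ.mulVec (φ x)))
    (hfγ : ∀ x, fγ x = (1 / ((N : ℝ) * Mγ)) * ∑ i, (k x (xs i)) ^ 2) :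
    ∀ x ∈ M, |fρ x - fγ x| < 3 * ε / Mγ := by
  intro x hx
  have : Nonempty (Fin N) := Fin.pos_iff_nonempty.mp hN
  have hMγ_pos : 0 < Mγ := hMγ ▸ Real.rpow_pos_of_pos (div_pos Real.pi_pos hγ) _
  have hdiff : fρ x - fγ x =
      (∑ i, ((φ x ⬝ᵥ φ (xs i)) ^ 2 - k x (xs i) ^ 2)) / Fintype.card (Fin N) / Mγ := by
    rw [hfρ, hfγ, hρ, smul_mulVec, dotProduct_smul, dotProduct_sum_vecMulVec_self_mulVec,
      sum_sub_distrib, Fintype.card_fin, smul_eq_mul]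
    field_simp
  have hterm : ∀ i, |(φ x ⬝ᵥ φ (xs i)) ^ 2 - k x (xs i) ^ 2| < 3 * ε := fun i =>
    abs_sq_sub_sq_lt (happrox x hx _ (hxs i)) (hbound x hx _ (hxs i)) three_pos
  rw [hdiff, abs_div, abs_of_pos hMγ_pos]
  exact div_lt_div_of_pos_right (abs_sum_div_card_lt hterm) hMγ_pos

open Finset in
theorem dmkde_deterministic_approx (d D N : ℕ) (hN : 0 < N)
    (γ ε : ℝ) (hγ : 0 < γ) (hε : 0 < ε)
    (M : Set (EuclideanSpace ℝ (Fin d)))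
    (φ : EuclideanSpace ℝ (Fin d) → (Fin D → ℝ))
    (xs : Fin N → EuclideanSpace ℝ (Fin d)) (hxs : ∀ i, xs i ∈ M)
    (k : EuclideanSpace ℝ (Fin d) → EuclideanSpace ℝ (Fin d) → ℝ)
    (hk : ∀ x y, k x y = Real.exp (-(γ / 2) * ‖x - y‖ ^ 2))
    (Mγ : ℝ) (hMγ : Mγ = (Real.pi / γ) ^ ((d : ℝ) / 2))
    (happrox : ∀ x ∈ M, ∀ y ∈ M, |dotProduct (φ x) (φ y) - k x y| < ε)
    (hbound : ∀ x ∈ M, ∀ y ∈ M, |dotProduct (φ x) (φ y) + k x y| ≤ 3)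
    (ρ : Matrix (Fin D) (Fin D) ℝ)
    (hρ : ρ = (1 / (N : ℝ)) • ∑ i, Matrix.vecMulVec (φ (xs i)) (φ (xs i)))
    (fρ fγ : EuclideanSpace ℝ (Fin d) → ℝ)
    (hfρ : ∀ x, fρ x = (1 / Mγ) * dotProduct (φ x) (ρ.mulVec (φ x)))
    (hfγ : ∀ x, fγ x = (1 / ((N : ℝ) * Mγ)) * ∑ i, (k x (xs i)) ^ 2) :
    ∀ x ∈ M, |fρ x - fγ x| < 3 * ε / Mγ :=
  dmkde_deterministic_approx_general d D N hN γ ε hγ M φ xs hxs k Mγ hMγ happrox hbound ρ hρ fρ fγ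
    hfρ hfγ
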